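/- arXiv:1209.5337 — 4 statements merged into one kernel-verified Lean document; each statement's English description precedes it below -/
import Mathlib

section
/- With Aᵢ defined by A₀ = 1, negative-index terms zero, and the recurrence A_{i+1} = [a₂((1+i)² - m)A_{i+1-m} + (M² + a₁/k)A_{i-1} - (a₂/k)A_{i-1-m}]/(a₁(1+i)²), where a₁ = 1 + a₂, a₂ ≥ 0, M ≥ 0, k > 0, m ≥ 2: all Aᵢ are nonnegative provided (1+i)² ≥ m holds whenever A_{i+1-m} ≠ 0 and a₂/k ≤ (M² + a₁/k); in particular when a₂ = 0 all Aᵢ ≥ 0. -/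
private lemma aux_key (M k : ℝ) (hk : 0 < k) (m : ℕ) (hm : 2 ≤ m)
    (a₁ a₂ : ℝ) (ha₂ : 0 ≤ a₂) (ha₁ : a₁ = 1 + a₂)
    (A : ℤ → ℝ) (hA0 : A 0 = 1) (hAneg : ∀ i : ℤ, i < 0 → A i = 0)
    (hrec : ∀ i : ℕ, A ((i:ℤ)+1) =
      (a₂*(((1:ℝ)+i)^2 - m) * A ((i:ℤ)+1-m)
        + (M^2 + a₁/k) * A ((i:ℤ)-1)
        - (a₂/k) * A ((i:ℤ)-1-m)) / (a₁ * ((1:ℝ)+i)^2))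
    (hprem : a₂ = 0 ∨ ∀ i : ℕ, A ((i:ℤ)+1-m) ≠ 0 → (m:ℝ) ≤ ((1:ℝ)+i)^2) :
    ∀ n : ℕ, 0 ≤ A (n:ℤ) ∧
      (M^2 + a₁/k) * A ((n:ℤ)-2) ≤ a₁ * (n:ℝ)^2 * A (n:ℤ) := by
  have ha₁pos : (0:ℝ) < a₁ := by rw [ha₁]; linarith
  have hcpos : 0 < M^2 + a₁/k := by
    have := div_pos ha₁pos hk
    nlinarith [sq_nonneg M]
  intro n
  induction n using Nat.strong_induction_on with
  | _ n IH =>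
  rcases n with _ | i
  · have h1 : A ((0:ℕ):ℤ) = 1 := by norm_num [hA0]
    have h2 : A (((0:ℕ):ℤ) - 2) = 0 := by
      rw [hAneg]; norm_num
    rw [h1, h2]
    norm_num
  · -- n = i+1
    have hnn : ∀ j : ℤ, j < (i:ℤ)+1 → 0 ≤ A j := by
      intro j hj
      rcases lt_or_ge j 0 with h | h
      · rw [hAneg j h]
      · lift j to ℕ using h
        have : j < i + 1 := by exact_mod_cast hj
        exact (IH j this).1
    -- the key inequality
    have hstar : (a₂/k) * A ((i:ℤ)-1-m) ≤ a₂*(((1:ℝ)+i)^2 - m) * A ((i:ℤ)+1-m) := by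
      rcases eq_or_lt_of_le ha₂ with h0 | ha₂pos
      · rw [← h0]; simp
      · have hp : ∀ i : ℕ, A ((i:ℤ)+1-m) ≠ 0 → (m:ℝ) ≤ ((1:ℝ)+i)^2 :=
          hprem.resolve_left (by intro h; rw [h] at ha₂pos; exact lt_irrefl 0 ha₂pos)
        by_cases hJ : A ((i:ℤ)-1-m) = 0
        · rw [hJ]
          by_cases hq : A ((i:ℤ)+1-m) = 0
          · rw [hq]; simp
          · have hm' := hp i hq
            have hqn : 0 ≤ A ((i:ℤ)+1-m) := by
              apply hnn
              have : (0:ℤ) < m := by exact_mod_cast (by omega : 0 < m)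
              omega
            have : 0 ≤ a₂*(((1:ℝ)+i)^2 - m) * A ((i:ℤ)+1-m) :=
              mul_nonneg (mul_nonneg ha₂ (by linarith)) hqn
            linarith [this]
        · have ht0 : 0 ≤ (i:ℤ)-1-m := by
            by_contra h
            exact hJ (hAneg _ (by omega))
          have him : m + 1 ≤ i := by omega
          set q : ℕ := i + 1 - m with hqdef
          set t : ℕ := i - 1 - m with htdef
          have hqcast : ((q:ℕ):ℤ) = (i:ℤ)+1-(m:ℤ) := by omega
          have htcast : ((t:ℕ):ℤ) = (i:ℤ)-1-(m:ℤ) := by omega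
          have hqlt : q < i + 1 := by omega
          have htlt : t < i + 1 := by omega
          have htA : 0 ≤ A ((i:ℤ)-1-m) := by
            have := (IH t htlt).1
            rwa [htcast] at this
          have hLq := (IH q hqlt).2
          have hq2 : ((q:ℕ):ℤ) - 2 = (i:ℤ)-1-(m:ℤ) := by omega
          rw [hq2, hqcast] at hLq
          -- hLq : (M^2+a₁/k) * A (i-1-m) ≤ a₁ * q^2 * A (i+1-m)
          have htpos : 0 < A ((i:ℤ)-1-m) := lt_of_le_of_ne htA (Ne.symm hJ)
          have hqr : (q:ℝ) = (1:ℝ) + i - m := by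
            have : ((q:ℤ):ℝ) = ((i:ℤ):ℝ)+1-((m:ℤ):ℝ) := by exact_mod_cast congrArg (Int.cast : ℤ → ℝ) hqcast
            push_cast at this ⊢
            linarith
          have hq2pos : (0:ℝ) < (q:ℝ)^2 := by
            have : (2:ℕ) ≤ q := by omega
            have : (2:ℝ) ≤ (q:ℝ) := by exact_mod_cast this
            nlinarith
          -- lower bound for A(i+1-m)
          have hca : a₁/k ≤ M^2 + a₁/k := by nlinarith [sq_nonneg M]
          have h1 : (a₁/k) * A ((i:ℤ)-1-m) ≤ a₁ * (q:ℝ)^2 * A ((i:ℤ)+1-m) := by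
            calc (a₁/k) * A ((i:ℤ)-1-m) ≤ (M^2 + a₁/k) * A ((i:ℤ)-1-m) := by
                  apply mul_le_mul_of_nonneg_right hca htA
              _ ≤ a₁ * (q:ℝ)^2 * A ((i:ℤ)+1-m) := hLq
          have hAq_lb : A ((i:ℤ)-1-m) / (k * (q:ℝ)^2) ≤ A ((i:ℤ)+1-m) := by
            rw [div_le_iff₀ (by positivity)]
            have h2 : (a₁/k) * A ((i:ℤ)-1-m) * k ≤ a₁ * (q:ℝ)^2 * A ((i:ℤ)+1-m) * k :=
              mul_le_mul_of_nonneg_right h1 hk.le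
            have h3 : (a₁/k) * A ((i:ℤ)-1-m) * k = a₁ * A ((i:ℤ)-1-m) := by
              field_simp
            rw [h3] at h2
            nlinarith [h2, ha₁pos]
          have hAqpos : 0 < A ((i:ℤ)+1-m) :=
            lt_of_lt_of_le (by positivity) hAq_lb
          have hprem_i := hp i (ne_of_gt hAqpos)
          have hmr : (2:ℝ) ≤ (m:ℝ) := by exact_mod_cast hm
          have himr : (m:ℝ) + 1 ≤ (i:ℝ) := by exact_mod_cast him
          have hqq : (q:ℝ)^2 ≤ ((1:ℝ)+i)^2 - m := by
            rw [hqr]; nlinarith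
          calc (a₂/k) * A ((i:ℤ)-1-m)
              = a₂ * (q:ℝ)^2 * (A ((i:ℤ)-1-m) / (k * (q:ℝ)^2)) := by
                have hq0 : (q:ℝ) ≠ 0 := by intro h; rw [h] at hq2pos; norm_num at hq2pos
                field_simp <;> ring
            _ ≤ a₂ * (q:ℝ)^2 * A ((i:ℤ)+1-m) := by
                apply mul_le_mul_of_nonneg_left hAq_lb (by positivity)
            _ ≤ a₂*(((1:ℝ)+i)^2 - m) * A ((i:ℤ)+1-m) := by
                apply mul_le_mul_of_nonneg_right _ hAqpos.le
                apply mul_le_mul_of_nonneg_left hqq ha₂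
    -- now conclude
    have hA1nonneg : 0 ≤ A ((i:ℤ)-1) := hnn _ (by omega)
    have hden : (0:ℝ) < a₁ * ((1:ℝ)+i)^2 := by
      have : (0:ℝ) < ((1:ℝ)+i)^2 := by positivity
      exact mul_pos ha₁pos this
    have hnumeq : a₁ * ((1:ℝ)+i)^2 * A ((i:ℤ)+1) =
        a₂*(((1:ℝ)+i)^2 - m) * A ((i:ℤ)+1-m)
        + (M^2 + a₁/k) * A ((i:ℤ)-1)
        - (a₂/k) * A ((i:ℤ)-1-m) := by
      rw [hrec i]
      field_simp
    have hnumge : (M^2 + a₁/k) * A ((i:ℤ)-1) ≤ a₁ * ((1:ℝ)+i)^2 * A ((i:ℤ)+1) := by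
      rw [hnumeq]; linarith
    have hApos : 0 ≤ A ((i:ℤ)+1) := by
      have h0 : 0 ≤ (M^2 + a₁/k) * A ((i:ℤ)-1) := mul_nonneg hcpos.le hA1nonneg
      rw [hrec i]
      apply div_nonneg _ hden.le
      linarith [hstar, h0]
    constructor
    · have : ((i+1:ℕ):ℤ) = (i:ℤ)+1 := by push_cast; ring
      rw [this]; exact hApos
    · have e1 : ((i+1:ℕ):ℤ) = (i:ℤ)+1 := by push_cast; ring
      have e2 : ((i+1:ℕ):ℤ) - 2 = (i:ℤ)-1 := by push_cast; ring
      have e3 : ((i+1:ℕ):ℝ)^2 = ((1:ℝ)+i)^2 := by push_cast; ring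
      rw [e2, e1, e3]
      exact hnumge

theorem stmt_9 (M k : ℝ) (hM : 0 ≤ M) (hk : 0 < k) (m : ℕ) (hm : 2 ≤ m)
    (a₁ a₂ : ℝ) (ha₂ : 0 ≤ a₂) (ha₁ : a₁ = 1 + a₂)
    (A : ℤ → ℝ) (hA0 : A 0 = 1) (hAneg : ∀ i : ℤ, i < 0 → A i = 0)
    (hrec : ∀ i : ℕ, A ((i:ℤ)+1) =
      (a₂*(((1:ℝ)+i)^2 - m) * A ((i:ℤ)+1-m)
        + (M^2 + a₁/k) * A ((i:ℤ)-1)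
        - (a₂/k) * A ((i:ℤ)-1-m)) / (a₁ * ((1:ℝ)+i)^2)) :
    ((∀ i : ℕ, A ((i:ℤ)+1-m) ≠ 0 → (m:ℝ) ≤ ((1:ℝ)+i)^2) →
      a₂/k ≤ M^2 + a₁/k → ∀ i : ℤ, 0 ≤ A i) ∧
    (a₂ = 0 → ∀ i : ℤ, 0 ≤ A i) := by
  have main : (a₂ = 0 ∨ ∀ i : ℕ, A ((i:ℤ)+1-m) ≠ 0 → (m:ℝ) ≤ ((1:ℝ)+i)^2) →
      ∀ i : ℤ, 0 ≤ A i := by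
    intro hprem i
    rcases lt_or_ge i 0 with h | h
    · rw [hAneg i h]
    · lift i to ℕ using h
      exact (aux_key M k hk m hm a₁ a₂ ha₂ ha₁ A hA0 hAneg hrec hprem i).1
  exact ⟨fun hp _ => main (Or.inr hp), fun h0 => main (Or.inl h0)⟩
end

section
/- When a₂ = 0 and a₁ = 1, the Frobenius coefficient sequences satisfy the bounds A_{2j} ≤ c^j/(j!)² and B_{2j} ≤ c^j/(j!)² with c = M² + 1/k; consequently both power series Σ Aᵢξⁱ and Σ Bᵢξ^{i+2} have infinite radius of convergence. -/
theorem stmt_10 (M k : ℝ) (hM : 0 ≤ M) (hk : 0 < k) (c : ℝ) (hc : c = M^2 + 1/k)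
    (A B : ℕ → ℝ) (hA0 : A 0 = 1) (hB0 : B 0 = 1)
    (hAodd : ∀ j : ℕ, A (2*j+1) = 0) (hBodd : ∀ j : ℕ, B (2*j+1) = 0)
    (hAeven : ∀ j : ℕ, A (2*j) = c^j / (4^j * (Nat.factorial j : ℝ)^2))
    (hBeven : ∀ j : ℕ, B (2*j) = c^j / ∏ s ∈ Finset.Icc 1 j, (2*(s:ℝ)+2)^2) :
    (∀ j : ℕ, A (2*j) ≤ c^j / (Nat.factorial j : ℝ)^2) ∧
    (∀ j : ℕ, B (2*j) ≤ c^j / (Nat.factorial j : ℝ)^2) ∧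
    (∀ ξ : ℝ, Summable (fun i : ℕ => A i * ξ^i)) ∧
    (∀ ξ : ℝ, Summable (fun i : ℕ => B i * ξ^(i+2))) := by
  have hc0 : 0 < c := by rw [hc]; positivity
  have hprod : ∀ j : ℕ, ∏ s ∈ Finset.Icc 1 j, (2*(s:ℝ)+2)^2
      = 4^j * ((j+1).factorial : ℝ)^2 := by
    intro j
    induction j with
    | zero => simp
    | succ n ih =>
      rw [Finset.prod_Icc_succ_top (by omega), ih,
        show n+1+1 = n+2 from rfl, Nat.factorial_succ (n+1)]
      push_cast
      ring
  have hfac1 : ∀ j : ℕ, (1:ℝ) ≤ (j.factorial : ℝ) := by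
    intro j; exact_mod_cast Nat.one_le_iff_ne_zero.mpr j.factorial_ne_zero
  have hfsq : ∀ j : ℕ, (j.factorial : ℝ) ≤ (j.factorial : ℝ)^2 := by
    intro j; nlinarith [hfac1 j]
  have hinj : Function.Injective (fun j : ℕ => 2*j) := fun a b h => by dsimp only at h; omega
  refine ⟨?_, ?_, ?_, ?_⟩
  · intro j
    rw [hAeven]
    apply div_le_div_of_nonneg_left (by positivity) (by positivity)
    exact le_mul_of_one_le_left (by positivity) (one_le_pow₀ (by norm_num))
  · intro j
    rw [hBeven, hprod]
    apply div_le_div_of_nonneg_left (by positivity) (by positivity)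
    have h1 : ((j.factorial : ℝ))^2 ≤ ((j+1).factorial : ℝ)^2 := by
      have : (j.factorial : ℝ) ≤ ((j+1).factorial : ℝ) := by
        exact_mod_cast Nat.factorial_le (by omega)
      nlinarith [hfac1 j]
    calc ((j.factorial : ℝ))^2 ≤ ((j+1).factorial : ℝ)^2 := h1
      _ ≤ 4^j * ((j+1).factorial : ℝ)^2 :=
        le_mul_of_one_le_left (by positivity) (one_le_pow₀ (by norm_num))
  · intro ξ
    have hz : ∀ i ∉ Set.range (fun j : ℕ => 2*j), A i * ξ^i = 0 := by
      intro i hi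
      rcases Nat.even_or_odd i with ⟨m, hm⟩ | ⟨m, hm⟩
      · exact absurd ⟨m, by dsimp only; omega⟩ hi
      · rw [show i = 2*m+1 from by omega, hAodd]; ring
    rw [← hinj.summable_iff hz]
    apply Summable.of_nonneg_of_le (fun j => ?_) (fun j => ?_)
      (Real.summable_pow_div_factorial (c*ξ^2/4))
    · simp only [Function.comp]
      rw [hAeven, pow_mul]
      positivity
    · simp only [Function.comp]
      rw [hAeven, pow_mul]
      have key : c^j/(4^j*(j.factorial:ℝ)^2) * (ξ^2)^j
          = (c*ξ^2)^j / (4^j*(j.factorial:ℝ)^2) := by rw [mul_pow]; ring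
      rw [key, div_pow, div_div]
      exact div_le_div_of_nonneg_left (by positivity) (by positivity)
        (mul_le_mul_of_nonneg_left (hfsq j) (by positivity))
  · intro ξ
    have hz : ∀ i ∉ Set.range (fun j : ℕ => 2*j), B i * ξ^(i+2) = 0 := by
      intro i hi
      rcases Nat.even_or_odd i with ⟨m, hm⟩ | ⟨m, hm⟩
      · exact absurd ⟨m, by dsimp only; omega⟩ hi
      · rw [show i = 2*m+1 from by omega, hBodd]; ring
    rw [← hinj.summable_iff hz]
    apply Summable.of_nonneg_of_le (fun j => ?_) (fun j => ?_)
      ((Real.summable_pow_div_factorial (c*ξ^2/4)).mul_left (ξ^2))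
    · simp only [Function.comp]
      rw [hBeven, hprod, pow_add, pow_mul]
      positivity
    · simp only [Function.comp]
      rw [hBeven, hprod, pow_add, pow_mul]
      have key : c^j/(4^j*((j+1).factorial:ℝ)^2) * ((ξ^2)^j * ξ^2)
          = (c*ξ^2)^j * ξ^2 / (4^j*((j+1).factorial:ℝ)^2) := by rw [mul_pow]; ring
      have key2 : ξ^2 * ((c*ξ^2/4)^j / (j.factorial:ℝ))
          = (c*ξ^2)^j * ξ^2 / (4^j*(j.factorial:ℝ)) := by
        rw [div_pow]; ring
      rw [key, key2]
      apply div_le_div_of_nonneg_left (by positivity) (by positivity)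
      apply mul_le_mul_of_nonneg_left _ (by positivity)
      calc (j.factorial : ℝ) ≤ (j.factorial : ℝ)^2 := hfsq j
        _ ≤ ((j+1).factorial : ℝ)^2 := by
          have : (j.factorial : ℝ) ≤ ((j+1).factorial : ℝ) := by
            exact_mod_cast Nat.factorial_le (by omega)
          nlinarith [hfac1 j]
end

section
/- In the case a₂ = 0, a₁ = 1, letting λ = √(M² + 1/k) > 0, the exact solution of (1/ξ)(ξu')' - λ²u = G̃ with u(R̄) = 0 and u bounded at 0 is u(ξ) = (G̃/λ²)(I₀(λξ)/I₀(λR̄) - 1), where I₀ is the modified Bessel function of the first kind of order zero; moreover u has the same sign as -G̃ on [0, R̄). -/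
noncomputable def bc (j : ℕ) : ℝ := ((4:ℝ)^j * (Nat.factorial j)^2)⁻¹

lemma bc_pos (j : ℕ) : 0 < bc j := by
  have := Nat.factorial_pos j
  unfold bc; positivity

lemma two_j_sq_le (j : ℕ) : ((2*j : ℕ) : ℝ)^2 ≤ 4^j := by
  induction j with
  | zero => norm_num
  | succ n ih =>
    rcases Nat.eq_zero_or_pos n with h | h
    · subst h; norm_num
    · have hn : (1:ℝ) ≤ (n:ℝ) := by exact_mod_cast h
      push_cast at ih ⊢
      have : (2*((n:ℝ)+1))^2 ≤ 4 * (2*(n:ℝ))^2 := by nlinarith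
      calc (2*((n:ℝ)+1))^2 ≤ 4 * (2*(n:ℝ))^2 := this
        _ ≤ 4 * 4^n := by linarith
        _ = 4^(n+1) := by ring

lemma bc_mul_le (j : ℕ) (a : ℝ) (ha : 0 ≤ a) (h : a ≤ 4^j) :
    bc j * a ≤ ((Nat.factorial j : ℝ))⁻¹ := by
  have hf : (1:ℝ) ≤ (Nat.factorial j : ℝ) := by exact_mod_cast (Nat.factorial_pos j)
  have h4 : (0:ℝ) < 4^j := by positivity
  unfold bc
  rw [mul_inv, mul_comm, ← mul_assoc]
  have h1 : a * ((4:ℝ)^j)⁻¹ ≤ 1 := by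
    rw [mul_inv_le_iff₀ h4, one_mul]; exact h
  have h2 : (((Nat.factorial j : ℝ))^2)⁻¹ ≤ ((Nat.factorial j : ℝ))⁻¹ := by
    apply inv_anti₀ (by linarith)
    nlinarith
  calc a * ((4:ℝ)^j)⁻¹ * (((Nat.factorial j:ℝ))^2)⁻¹
      ≤ 1 * (((Nat.factorial j:ℝ))^2)⁻¹ := by
        apply mul_le_mul_of_nonneg_right h1; positivity
    _ = (((Nat.factorial j:ℝ))^2)⁻¹ := one_mul _
    _ ≤ ((Nat.factorial j:ℝ))⁻¹ := h2

lemma summable_bound (R : ℝ) : Summable (fun j : ℕ => R^(2*j) / (Nat.factorial j : ℝ)) := by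
  have := Real.summable_pow_div_factorial (R^2)
  simpa [pow_mul] using this

noncomputable def bS (x : ℝ) : ℝ := ∑' j : ℕ, bc j * x^(2*j)
noncomputable def bT (x : ℝ) : ℝ := ∑' j : ℕ, (bc j * ((2*j : ℕ):ℝ)) * x^(2*j)

lemma abs_le_bound (y R : ℝ) (hR : 1 ≤ R) (hy : |y| ≤ R) (j : ℕ) (a : ℝ)
    (ha : 0 ≤ a) (haj : a ≤ 4^j) (m : ℕ) :
    |bc j * a * y^m| ≤ R^(2*j) / (Nat.factorial j : ℝ) → True := fun _ => trivial

-- main bound: for |y| ≤ R, R ≥ 1, m ≤ 2*j: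
lemma term_bound (y R : ℝ) (hR : 1 ≤ R) (hy : |y| ≤ R) (j : ℕ) (a : ℝ)
    (ha : 0 ≤ a) (haj : a ≤ 4^j) (m : ℕ) (hm : m ≤ 2*j) :
    |bc j * a * y^m| ≤ R^(2*j) / (Nat.factorial j : ℝ) := by
  have h0 : (0:ℝ) ≤ |y| := abs_nonneg y
  have hR0 : (0:ℝ) ≤ R := by linarith
  have hbc := (bc_pos j).le
  rw [abs_mul, abs_mul, abs_of_nonneg hbc, abs_of_nonneg ha, abs_pow]
  have h1 : |y|^m ≤ R^(2*j) := by
    calc |y|^m ≤ R^m := pow_le_pow_left₀ h0 hy m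
      _ ≤ R^(2*j) := pow_le_pow_right₀ hR hm
  have h2 : bc j * a ≤ ((Nat.factorial j : ℝ))⁻¹ := bc_mul_le j a ha haj
  have hRj : (0:ℝ) ≤ R^(2*j) := by positivity
  calc bc j * a * |y|^m ≤ ((Nat.factorial j:ℝ))⁻¹ * R^(2*j) := by
        apply mul_le_mul h2 h1 (by positivity) (by positivity)
    _ = R^(2*j) / (Nat.factorial j : ℝ) := by ring

lemma two_j_le (j : ℕ) : ((2*j:ℕ):ℝ) ≤ 4^j := by
  have h := two_j_sq_le j
  rcases Nat.eq_zero_or_pos j with h0 | h0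
  · subst h0; norm_num
  · have h1 : (1:ℝ) ≤ ((2*j:ℕ):ℝ) := by
      have : 1 ≤ 2*j := by omega
      exact_mod_cast this
    nlinarith

lemma summable_bS (x : ℝ) : Summable (fun j : ℕ => bc j * x^(2*j)) := by
  apply Summable.of_norm_bounded (summable_bound (|x|+1))
  intro j
  have := term_bound x (|x|+1) (by linarith [abs_nonneg x]) (by linarith [abs_nonneg x]) j 1
    zero_le_one (one_le_pow₀ (by norm_num)) (2*j) le_rfl
  rw [mul_one] at this
  rw [Real.norm_eq_abs]
  exact this

lemma summable_bT (x : ℝ) : Summable (fun j : ℕ => (bc j * ((2*j:ℕ):ℝ)) * x^(2*j)) := by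
  apply Summable.of_norm_bounded (summable_bound (|x|+1))
  intro j
  rw [Real.norm_eq_abs]
  exact term_bound x (|x|+1) (by linarith [abs_nonneg x]) (by linarith [abs_nonneg x]) j _
    (by positivity) (two_j_le j) (2*j) le_rfl

lemma mem_ball_self' (x : ℝ) : x ∈ Metric.ball (0:ℝ) (|x|+1) := by
  rw [Metric.mem_ball, Real.dist_eq, sub_zero]
  linarith

lemma hasDerivAt_bS (x : ℝ) :
    HasDerivAt bS (∑' j : ℕ, bc j * (((2*j:ℕ):ℝ) * x^(2*j-1))) x := by
  apply hasDerivAt_tsum_of_isPreconnected (summable_bound (|x|+1))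
    Metric.isOpen_ball ((convex_ball (0:ℝ) (|x|+1)).isPreconnected)
    (g := fun n y => bc n * y^(2*n))
    (fun n y _ => (hasDerivAt_pow (2*n) y).const_mul (bc n))
    ?_ (mem_ball_self' x) (summable_bS x) (mem_ball_self' x)
  intro n y hy
  rw [Metric.mem_ball, Real.dist_eq, sub_zero] at hy
  rw [Real.norm_eq_abs, ← mul_assoc]
  exact term_bound y (|x|+1) (by linarith [abs_nonneg x]) hy.le n _
    (by positivity) (two_j_le n) (2*n-1) (Nat.sub_le _ _)

lemma summable_bT' (x : ℝ) :
    Summable (fun j : ℕ => (bc j * ((2*j:ℕ):ℝ)) * (((2*j:ℕ):ℝ) * x^(2*j-1))) := by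
  apply Summable.of_norm_bounded (summable_bound (|x|+1))
  intro j
  rw [Real.norm_eq_abs,
    show (bc j * ((2*j:ℕ):ℝ)) * (((2*j:ℕ):ℝ) * x^(2*j-1))
       = bc j * (((2*j:ℕ):ℝ))^2 * x^(2*j-1) from by ring]
  exact term_bound x (|x|+1) (by linarith [abs_nonneg x]) (by linarith [abs_nonneg x]) j _
    (by positivity) (two_j_sq_le j) (2*j-1) (Nat.sub_le _ _)

lemma hasDerivAt_bT (x : ℝ) :
    HasDerivAt bT (∑' j : ℕ, (bc j * ((2*j:ℕ):ℝ)) * (((2*j:ℕ):ℝ) * x^(2*j-1))) x := by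
  apply hasDerivAt_tsum_of_isPreconnected (summable_bound (|x|+1))
    Metric.isOpen_ball ((convex_ball (0:ℝ) (|x|+1)).isPreconnected)
    (g := fun n y => (bc n * ((2*n:ℕ):ℝ)) * y^(2*n))
    (fun n y _ => (hasDerivAt_pow (2*n) y).const_mul (bc n * ((2*n:ℕ):ℝ)))
    ?_ (mem_ball_self' x) (summable_bT x) (mem_ball_self' x)
  intro n y hy
  rw [Metric.mem_ball, Real.dist_eq, sub_zero] at hy
  rw [Real.norm_eq_abs,
    show (bc n * ((2*n:ℕ):ℝ)) * (((2*n:ℕ):ℝ) * y^(2*n-1))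
       = bc n * (((2*n:ℕ):ℝ))^2 * y^(2*n-1) from by ring]
  exact term_bound y (|x|+1) (by linarith [abs_nonneg x]) hy.le n _
    (by positivity) (two_j_sq_le n) (2*n-1) (Nat.sub_le _ _)

lemma bT_eq (x : ℝ) :
    x * (∑' j : ℕ, bc j * (((2*j:ℕ):ℝ) * x^(2*j-1))) = bT x := by
  rw [← tsum_mul_left]
  apply tsum_congr
  intro j
  cases j with
  | zero => simp
  | succ i =>
    rw [show 2*(i+1)-1 = 2*i+1 from by omega]
    push_cast
    ring

lemma bc_rec (i : ℕ) : bc (i+1) * (((2*(i+1):ℕ)):ℝ)^2 = bc i := by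
  unfold bc
  have h1 : ((Nat.factorial i : ℝ)) ≠ 0 := by
    exact_mod_cast (Nat.factorial_pos i).ne'
  have h2 : ((i:ℝ)+1) ≠ 0 := by positivity
  push_cast [Nat.factorial_succ]
  field_simp
  ring

lemma bT'_eq (x : ℝ) :
    (∑' j : ℕ, (bc j * ((2*j:ℕ):ℝ)) * (((2*j:ℕ):ℝ) * x^(2*j-1))) = x * bS x := by
  rw [Summable.tsum_eq_zero_add (summable_bT' x)]
  unfold bS
  rw [← tsum_mul_left]
  simp only [Nat.mul_zero, Nat.cast_zero, mul_zero, zero_mul, zero_add]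
  apply tsum_congr
  intro i
  have h := bc_rec i
  rw [show 2*(i+1)-1 = 2*i+1 from by omega]
  push_cast at h ⊢
  linear_combination (x^(2*i+1)) * h

lemma term_nonneg (j : ℕ) (x : ℝ) : 0 ≤ bc j * x^(2*j) := by
  rw [pow_mul]
  have := bc_pos j
  positivity

lemma one_le_bS (x : ℝ) : 1 ≤ bS x := by
  have h := Summable.le_tsum (summable_bS x) 0 (fun j _ => term_nonneg j x)
  have h0 : bc 0 * x^(2*0) = 1 := by norm_num [bc]
  rw [h0] at h
  exact h

lemma bS_lt_bS {a b : ℝ} (ha : 0 ≤ a) (hab : a < b) : bS a < bS b := by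
  refine Summable.tsum_lt_tsum (i := 1)
    (fun j => mul_le_mul_of_nonneg_left (pow_le_pow_left₀ ha hab.le _) (bc_pos j).le)
    ?_ (summable_bS a) (summable_bS b)
  have h2 : a^2 < b^2 := by nlinarith
  have h3 := bc_pos 1
  norm_num
  nlinarith

theorem stmt_17 (M k : ℝ) (hM : 0 ≤ M) (hk : 0 < k)
    (lam : ℝ) (hlam : lam = Real.sqrt (M^2 + 1/k))
    (Rb Gt : ℝ) (hRb : Rb ∈ Set.Ioc (0:ℝ) 1)
    (I₀ : ℝ → ℝ)
    (hI₀ : ∀ x, I₀ x = ∑' j : ℕ, (x/2)^(2*j) / (Nat.factorial j : ℝ)^2)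
    (u : ℝ → ℝ)
    (hu : ∀ ξ, u ξ = (Gt / lam^2) * (I₀ (lam*ξ) / I₀ (lam*Rb) - 1)) :
    (∀ ξ ∈ Set.Ioo (0:ℝ) Rb,
      (1/ξ) * deriv (fun x => x * deriv u x) ξ - lam^2 * u ξ = Gt) ∧
    u Rb = 0 ∧
    (∀ ξ ∈ Set.Ico (0:ℝ) Rb,
      (0 < -Gt → 0 < u ξ) ∧ (-Gt < 0 → u ξ < 0) ∧ (Gt = 0 → u ξ = 0)) := by
  have hlam0 : 0 < lam := by
    rw [hlam]
    apply Real.sqrt_pos.mpr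
    have : 0 < 1/k := by positivity
    positivity
  have hlam2 : (0:ℝ) < lam^2 := by positivity
  have hIS : ∀ y, I₀ y = bS y := by
    intro y
    rw [hI₀]
    apply tsum_congr
    intro j
    have h1 : ((Nat.factorial j : ℝ)) ≠ 0 := by
      exact_mod_cast (Nat.factorial_pos j).ne'
    have h2 : ((2:ℝ))^(2*j) = 4^j := by rw [pow_mul]; norm_num
    rw [div_pow, h2]
    unfold bc
    field_simp
  set Bs := bS (lam * Rb) with hBsdef
  have hBs1 : 1 ≤ Bs := one_le_bS _
  have hBs0 : Bs ≠ 0 := by linarith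
  have hu' : u = fun ξ => (Gt/lam^2/Bs) * bS (lam*ξ) - Gt/lam^2 := by
    funext ξ
    rw [hu ξ, hIS (lam*ξ), hIS (lam*Rb), ← hBsdef]
    ring
  have hmul : ∀ x : ℝ, HasDerivAt (fun y : ℝ => lam * y) lam x := by
    intro x
    simpa using (hasDerivAt_id x).const_mul lam
  have hu_deriv : ∀ x : ℝ, HasDerivAt u
      ((Gt/lam^2/Bs) * ((∑' j : ℕ, bc j * (((2*j:ℕ):ℝ) * (lam*x)^(2*j-1))) * lam)) x := by
    intro x
    rw [hu']
    exact (((hasDerivAt_bS (lam*x)).comp x (hmul x)).const_mul _).sub_const _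
  have hdu : deriv u = fun x =>
      (Gt/lam^2/Bs) * ((∑' j : ℕ, bc j * (((2*j:ℕ):ℝ) * (lam*x)^(2*j-1))) * lam) :=
    funext fun x => (hu_deriv x).deriv
  have hxdu : (fun x => x * deriv u x) = fun x => (Gt/lam^2/Bs) * bT (lam*x) := by
    funext x
    rw [hdu, ← bT_eq (lam*x)]
    ring
  refine ⟨?_, ?_, ?_⟩
  · intro ξ hξ
    have hξ0 : ξ ≠ 0 := ne_of_gt hξ.1
    have hTd : HasDerivAt (fun x => (Gt/lam^2/Bs) * bT (lam*x))
        ((Gt/lam^2/Bs) * (((lam*ξ) * bS (lam*ξ)) * lam)) ξ := by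
      have h2 := (hasDerivAt_bT (lam*ξ)).comp ξ (hmul ξ)
      rw [bT'_eq (lam*ξ)] at h2
      exact h2.const_mul _
    rw [hxdu, hTd.deriv, hu']
    have hlamne : lam ≠ 0 := ne_of_gt hlam0
    field_simp
    ring
  · rw [hu']
    simp only
    rw [← hBsdef, div_mul_cancel₀ _ hBs0, sub_self]
  · intro ξ hξ
    have hs_lt : bS (lam*ξ) < Bs := by
      rw [hBsdef]
      exact bS_lt_bS (mul_nonneg hlam0.le hξ.1) (mul_lt_mul_of_pos_left hξ.2 hlam0)
    have hE : bS (lam*ξ)/Bs - 1 < 0 := by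
      rw [sub_neg]
      exact (div_lt_one (by linarith)).mpr hs_lt
    have huξ : u ξ = (Gt/lam^2) * (bS (lam*ξ)/Bs - 1) := by
      rw [hu']; ring
    refine ⟨?_, ?_, ?_⟩
    · intro hG
      have hGt : Gt < 0 := by linarith
      have : Gt/lam^2 < 0 := div_neg_of_neg_of_pos hGt hlam2
      rw [huξ]
      exact mul_pos_of_neg_of_neg this hE
    · intro hG
      have hGt : 0 < Gt := by linarith
      have : 0 < Gt/lam^2 := div_pos hGt hlam2
      rw [huξ]
      exact mul_neg_of_pos_of_neg this hE
    · intro hG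
      rw [huξ, hG]
      ring
end

section
/- For fixed R̄ ∈ (0,1], G̃ < 0, and ξ = 0, the centerline velocity u(0) = (G̃/λ²)(1/I₀(λR̄) - 1) of the Bessel-function solution is strictly decreasing in λ on (0, ∞); i.e., increasing the Hartmann number M (hence λ) strictly decreases the centerline velocity. -/
noncomputable def cf (j : ℕ) : ℝ := (1/4 : ℝ)^j / (Nat.factorial j : ℝ)^2

lemma cf_pos (j : ℕ) : 0 < cf j := by
  unfold cf
  have := Nat.factorial_pos j
  positivity

lemma cf_succ (j : ℕ) : cf (j+1) = cf j * (1 / (4 * ((j:ℝ)+1)^2)) := by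
  unfold cf
  rw [Nat.factorial_succ]
  have h1 : (Nat.factorial j : ℝ) ≠ 0 := by
    exact_mod_cast (Nat.factorial_pos j).ne'
  push_cast
  field_simp
  ring

lemma summable_I {s : ℝ} (hs : 0 ≤ s) : Summable (fun j : ℕ => cf j * s^j) := by
  refine Summable.of_nonneg_of_le (fun j => ?_) (fun j => ?_)
    (Real.summable_pow_div_factorial (s/4))
  · exact mul_nonneg (cf_pos j).le (pow_nonneg hs j)
  · have h1 : cf j * s^j = (s/4)^j / ((Nat.factorial j : ℝ))^2 := by
      unfold cf; rw [div_pow, div_pow, one_pow]; ring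
    rw [h1]
    have h2 : (1:ℝ) ≤ (Nat.factorial j : ℝ) := by
      exact_mod_cast Nat.one_le_iff_ne_zero.mpr (Nat.factorial_pos j).ne'
    have h3 : (Nat.factorial j : ℝ) ≤ ((Nat.factorial j : ℝ))^2 := by nlinarith
    have h4 : (0:ℝ) < (Nat.factorial j : ℝ) := by linarith
    have h5 : (0:ℝ) ≤ (s/4)^j := by positivity
    exact div_le_div_of_nonneg_left h5 h4 h3

lemma cf_succ_le (j : ℕ) : cf (j+1) ≤ cf j := by
  rw [cf_succ]
  have h := cf_pos j
  have h1 : 1 / (4 * ((j:ℝ)+1)^2) ≤ 1 := by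
    rw [div_le_one (by positivity)]
    nlinarith [(Nat.cast_nonneg j : (0:ℝ) ≤ j)]
  nlinarith

lemma summable_J {s : ℝ} (hs : 0 ≤ s) : Summable (fun j : ℕ => cf (j+1) * s^j) := by
  refine Summable.of_nonneg_of_le (fun j => ?_) (fun j => ?_) (summable_I hs)
  · exact mul_nonneg (cf_pos _).le (pow_nonneg hs j)
  · exact mul_le_mul_of_nonneg_right (cf_succ_le j) (pow_nonneg hs j)

noncomputable def It (s : ℝ) : ℝ := ∑' j : ℕ, cf j * s^j
noncomputable def Jt (s : ℝ) : ℝ := ∑' j : ℕ, cf (j+1) * s^j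

lemma Jt_nonneg {s : ℝ} (hs : 0 ≤ s) : 0 ≤ Jt s :=
  tsum_nonneg (fun j => mul_nonneg (cf_pos _).le (pow_nonneg hs j))

lemma It_eq {s : ℝ} (hs : 0 ≤ s) : It s = 1 + s * Jt s := by
  unfold It Jt
  rw [Summable.tsum_eq_zero_add (summable_I hs)]
  have h0 : cf 0 * s^0 = 1 := by unfold cf; norm_num
  rw [h0, ← tsum_mul_left]
  congr 1
  exact tsum_congr (fun j => by ring)

lemma It_pos {s : ℝ} (hs : 0 ≤ s) : 0 < It s := by
  rw [It_eq hs]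
  nlinarith [Jt_nonneg hs]

lemma monocf {j k : ℕ} (h : j ≤ k) : cf (k+1) * cf j ≤ cf (j+1) * cf k := by
  rw [cf_succ, cf_succ]
  have h1 : 1 / (4 * ((k:ℝ)+1)^2) ≤ 1 / (4 * ((j:ℝ)+1)^2) := by
    have hjk : ((j:ℝ)+1) ≤ ((k:ℝ)+1) := by exact_mod_cast Nat.succ_le_succ h
    apply one_div_le_one_div_of_le (by positivity)
    nlinarith [(Nat.cast_nonneg j : (0:ℝ) ≤ j), (Nat.cast_nonneg k : (0:ℝ) ≤ k)]
  nlinarith [cf_pos j, cf_pos k, mul_pos (cf_pos j) (cf_pos k),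
    mul_le_mul_of_nonneg_left h1 (mul_pos (cf_pos j) (cf_pos k)).le]

lemma monopow {u v : ℝ} (hu : 0 ≤ u) (huv : u ≤ v) {j k : ℕ} (h : j ≤ k) :
    u^k * v^j ≤ u^j * v^k := by
  obtain ⟨d, rfl⟩ := Nat.exists_eq_add_of_le h
  rw [pow_add, pow_add]
  have hd : u^d ≤ v^d := pow_le_pow_left₀ hu huv d
  have hv : 0 ≤ v := hu.trans huv
  calc u^j * u^d * v^j = (u^j * v^j) * u^d := by ring
    _ ≤ (u^j * v^j) * v^d := by
        apply mul_le_mul_of_nonneg_left hd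
        positivity
    _ = u^j * (v^j * v^d) := by ring

set_option maxHeartbeats 1000000 in
lemma key_ineq {u v : ℝ} (hu : 0 ≤ u) (huv : u < v) : Jt v * It u < Jt u * It v := by
  have hv : 0 ≤ v := hu.trans huv.le
  have sIu := summable_I hu
  have sIv := summable_I hv
  have sJu := summable_J hu
  have sJv := summable_J hv
  set F : ℕ × ℕ → ℝ := fun p => (cf (p.1+1) * u^p.1) * (cf p.2 * v^p.2) with hFdef
  set G : ℕ × ℕ → ℝ := fun p => (cf (p.1+1) * v^p.1) * (cf p.2 * u^p.2) with hGdef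
  have sF : Summable F := sJu.mul_of_nonneg sIv
    (fun j => mul_nonneg (cf_pos _).le (pow_nonneg hu j))
    (fun j => mul_nonneg (cf_pos _).le (pow_nonneg hv j))
  have sG : Summable G := sJv.mul_of_nonneg sIu
    (fun j => mul_nonneg (cf_pos _).le (pow_nonneg hv j))
    (fun j => mul_nonneg (cf_pos _).le (pow_nonneg hu j))
  have hF : Jt u * It v = ∑' p : ℕ × ℕ, F p := Summable.tsum_mul_tsum sJu sIv sF
  have hG : Jt v * It u = ∑' p : ℕ × ℕ, G p := Summable.tsum_mul_tsum sJv sIu sG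
  have sFG : Summable (fun p : ℕ × ℕ => F p - G p) := sF.sub sG
  have sFGswap : Summable (fun p : ℕ × ℕ => F p.swap - G p.swap) :=
    (Equiv.prodComm ℕ ℕ).summable_iff.mpr sFG
  have hD : Jt u * It v - Jt v * It u = ∑' p : ℕ × ℕ, (F p - G p) := by
    rw [hF, hG, Summable.tsum_sub sF sG]
  have hswap : (∑' p : ℕ × ℕ, (F p - G p)) = ∑' p : ℕ × ℕ, (F p.swap - G p.swap) :=
    ((Equiv.prodComm ℕ ℕ).tsum_eq (fun p => F p - G p)).symm
  set H : ℕ × ℕ → ℝ := fun p => (F p - G p) + (F p.swap - G p.swap) with hHdef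
  have sH : Summable H := sFG.add sFGswap
  have hHform : ∀ p : ℕ × ℕ,
      H p = (cf (p.1+1) * cf p.2 - cf (p.2+1) * cf p.1) * (u^p.1 * v^p.2 - v^p.1 * u^p.2) := by
    intro p
    simp only [hHdef, hFdef, hGdef, Prod.fst_swap, Prod.snd_swap]
    ring
  have hHnonneg : ∀ p : ℕ × ℕ, 0 ≤ H p := by
    intro ⟨j, k⟩
    rw [hHform]
    rcases le_total j k with h | h
    · apply mul_nonneg
      · linarith [monocf h]
      · linarith [monopow hu huv.le h, mul_comm (v^j) (u^k)]
    · rw [← neg_mul_neg]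
      apply mul_nonneg
      · linarith [monocf h]
      · linarith [monopow hu huv.le h, mul_comm (v^j) (u^k)]
  have hH01 : 0 < H (0, 1) := by
    rw [hHform]
    simp only [pow_zero, pow_one]
    have hc : cf (0+1) * cf 1 - cf (1+1) * cf 0 = 3/64 := by
      unfold cf
      norm_num [Nat.factorial]
    rw [hc]
    nlinarith
  have hpos : 0 < ∑' p : ℕ × ℕ, H p := Summable.tsum_pos sH hHnonneg (0, 1) hH01
  have h2 : (∑' p : ℕ × ℕ, H p) =
      (∑' p : ℕ × ℕ, (F p - G p)) + ∑' p : ℕ × ℕ, (F p.swap - G p.swap) :=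
    Summable.tsum_add sFG sFGswap
  rw [h2, ← hswap] at hpos
  linarith [hD ▸ hpos]

theorem stmt_18 (Rb Gt : ℝ) (hRb : Rb ∈ Set.Ioc (0:ℝ) 1) (hGt : Gt < 0)
    (I₀ : ℝ → ℝ)
    (hI₀ : ∀ x, I₀ x = ∑' j : ℕ, (x/2)^(2*j) / (Nat.factorial j : ℝ)^2) :
    StrictAntiOn (fun lam : ℝ => (Gt / lam^2) * (1 / I₀ (lam*Rb) - 1))
      (Set.Ioi (0:ℝ)) := by
  have hR : 0 < Rb := hRb.1
  have hI : ∀ x : ℝ, I₀ x = It (x^2) := by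
    intro x
    rw [hI₀]
    unfold It
    refine tsum_congr (fun j => ?_)
    have h : ((x/2:ℝ))^2 = x^2 * (1/4) := by ring
    rw [pow_mul, h, mul_pow]
    unfold cf
    ring
  intro a ha b hb hab
  simp only [Set.mem_Ioi] at ha hb
  simp only
  rw [hI, hI]
  have key : ∀ (lam : ℝ), 0 < lam →
      Gt / lam^2 * (1 / It ((lam*Rb)^2) - 1)
        = (-Gt * Rb^2) * (Jt ((lam*Rb)^2) / It ((lam*Rb)^2)) := by
    intro lam hlam
    have hs : (0:ℝ) ≤ (lam*Rb)^2 := sq_nonneg _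
    have hIt := It_eq hs
    have hItpos := It_pos hs
    have h0 : It ((lam*Rb)^2) ≠ 0 := ne_of_gt hItpos
    have h1 : 1 / It ((lam*Rb)^2) - 1 = -((lam*Rb)^2 * Jt ((lam*Rb)^2)) / It ((lam*Rb)^2) := by
      rw [eq_div_iff h0, sub_mul, one_div_mul_cancel h0]
      linarith [hIt]
    rw [h1]
    have hlam0 : lam ≠ 0 := ne_of_gt hlam
    field_simp
  rw [key a ha, key b hb]
  have hu : (0:ℝ) ≤ (a*Rb)^2 := sq_nonneg _
  have huv : (a*Rb)^2 < (b*Rb)^2 := by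
    apply pow_lt_pow_left₀ _ (by positivity) (by norm_num)
    exact mul_lt_mul_of_pos_right hab hR
  have hItu := It_pos hu
  have hItv := It_pos (hu.trans huv.le)
  have hkey := key_ineq hu huv
  have hfac : 0 < -Gt * Rb^2 := mul_pos (by linarith) (by positivity)
  apply mul_lt_mul_of_pos_left _ hfac
  exact (div_lt_div_iff₀ hItv hItu).mpr hkey
end
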